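/- arXiv:1805.06800 — 2 statements merged into one kernel-verified Lean document; each statement's English description precedes it below -/
import Mathlib

section
/- Define sgn : ℝ → ℝ by sgn(x) = 1 if x > 0, sgn(x) = -1 if x < 0, and sgn(0) = 0. Let T, λ, ε > 0 with 0 < 1 - T·λ < 1, and let s : ℕ → ℝ satisfy Gao's discrete reaching law s(k+1) = (1 - T·λ)·s(k) - T·ε·sgn(s(k)). Then (a) for every k with s(k) > 0 one has s(k+1) ≤ s(k) - T·ε, and (b) if s(0) > 0 there exists k ∈ ℕ with s(k) ≤ 0, i.e., the trajectory reaches or crosses the switching plane s = 0 in finite time. -/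
noncomputable def sgn (x : ℝ) : ℝ := if 0 < x then 1 else if x < 0 then -1 else 0

theorem stmt_9 (T lam ε : ℝ) (hT : 0 < T) (hlam : 0 < lam) (hε : 0 < ε)
    (hcond : 0 < 1 - T * lam ∧ 1 - T * lam < 1)
    (s : ℕ → ℝ)
    (hrec : ∀ k, s (k + 1) = (1 - T * lam) * s k - T * ε * sgn (s k)) :
    (∀ k, 0 < s k → s (k + 1) ≤ s k - T * ε) ∧
    (0 < s 0 → ∃ k : ℕ, s k ≤ 0) := by
  obtain ⟨h1, h2⟩ := hcond
  have hTε : 0 < T * ε := mul_pos hT hε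
  have key : ∀ k, 0 < s k → s (k + 1) ≤ s k - T * ε := by
    intro k hk
    rw [hrec k, sgn, if_pos hk]
    have : (1 - T * lam) * s k ≤ s k := by nlinarith
    linarith
  refine ⟨key, fun h0 => ?_⟩
  by_contra hcon
  push_neg at hcon
  have hdesc : ∀ k : ℕ, s k ≤ s 0 - k * (T * ε) := by
    intro k
    induction k with
    | zero => simp
    | succ n ih =>
      have := key n (hcon n)
      push_cast
      linarith
  obtain ⟨k, hk⟩ := exists_nat_gt (s 0 / (T * ε))
  have : s 0 < k * (T * ε) := by
    rw [div_lt_iff₀ hTε] at hk; linarith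
  have := hdesc k
  have := hcon k
  linarith
end

section
/- Fix r ∈ ℕ, let β be a real symmetric r×r matrix, and let s : ℕ → ℝʳ satisfy the second order sliding condition s(k+1) = -β·s(k) for all k. Define V*(k) = (1/2)(s(k+1)ᵀ·s(k+1) + s(k)ᵀ·β·s(k)). Then for every k, V*(k+1) - V*(k) = -(1/2)·s(k)ᵀ·β·(I - β)·(I + β)²·s(k). -/
open Matrix

private lemma symm_dot {r : ℕ} (β : Matrix (Fin r) (Fin r) ℝ) (hβ : β.IsSymm)
    (x y : Fin r → ℝ) : (β *ᵥ x) ⬝ᵥ y = x ⬝ᵥ (β *ᵥ y) := by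
  rw [dotProduct_comm, Matrix.dotProduct_mulVec, ← Matrix.mulVec_transpose, hβ.eq,
    dotProduct_comm]

theorem stmt_15 (r : ℕ) (β : Matrix (Fin r) (Fin r) ℝ) (hβ : β.IsSymm)
    (s : ℕ → Fin r → ℝ) (hrec : ∀ k, s (k + 1) = -(β *ᵥ s k))
    (Vstar : ℕ → ℝ)
    (hV : ∀ k, Vstar k = (1 / 2) * (s (k + 1) ⬝ᵥ s (k + 1) + s k ⬝ᵥ (β *ᵥ s k))) :
    ∀ k, Vstar (k + 1) - Vstar k =
      -(1 / 2) * (s k ⬝ᵥ ((β * (1 - β) * (1 + β) ^ 2) *ᵥ s k)) := by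
  intro k
  have hm : β * (1 - β) * (1 + β) ^ 2 = β + β * β - β * (β * β) - β * (β * (β * β)) := by
    noncomm_ring
  set x := s k with hx
  rw [hV, hV, hrec k, hrec (k + 1), hrec k, hm]
  simp only [Matrix.mulVec_neg, dotProduct_neg, neg_dotProduct, neg_neg,
    Matrix.mulVec_mulVec, Matrix.add_mulVec, Matrix.sub_mulVec, Matrix.mulVec_mulVec,
    dotProduct_add, dotProduct_sub]
  have h2 : ((β * β) *ᵥ x) ⬝ᵥ ((β * β) *ᵥ x) = x ⬝ᵥ ((β * (β * (β * β))) *ᵥ x) := by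
    rw [← Matrix.mulVec_mulVec, ← Matrix.mulVec_mulVec, symm_dot β hβ, symm_dot β hβ]
    simp [Matrix.mulVec_mulVec, mul_assoc]
  have h3 : (β *ᵥ x) ⬝ᵥ ((β * β) *ᵥ x) = x ⬝ᵥ ((β * (β * β)) *ᵥ x) := by
    rw [symm_dot β hβ, Matrix.mulVec_mulVec]
  have h4 : (β *ᵥ x) ⬝ᵥ (β *ᵥ x) = x ⬝ᵥ ((β * β) *ᵥ x) := by
    rw [symm_dot β hβ, Matrix.mulVec_mulVec]
  rw [h2, h3, h4]
  ring
end
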